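/- arXiv:1507.07996 — 2 statements merged into one kernel-verified Lean document; each statement's English description precedes it below -/
import Mathlib

section
/- For every integer n, the abelian group presented by the 4×4 integer matrix [[4,0,-1,0],[0,-4,0,1],[-1,0,2-n,n],[0,1,n,-n-2]] (i.e., the cokernel of the associated linear map ℤ⁴ → ℤ⁴) is isomorphic to ℤ/7 ⊕ ℤ/7 if 7 divides n, and to ℤ/49 otherwise. -/
/-- The Goeritz matrix of the symmetric union `K_n(5_2)`. -/
def goeritz (n : ℤ) : Matrix (Fin 4) (Fin 4) ℤ :=
  Matrix.of ![![4, 0, -1, 0], ![0, -4, 0, 1], ![-1, 0, 2 - n, n], ![0, 1, n, -n - 2]]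

/-- The abelian group presented by the matrix `goeritz n`: the cokernel of the
associated linear map `ℤ⁴ → ℤ⁴`. -/
def goeritzCoker (n : ℤ) : Type :=
  (Fin 4 → ℤ) ⧸ LinearMap.range (Matrix.toLin' (goeritz n))

noncomputable instance (n : ℤ) : AddCommGroup (goeritzCoker n) :=
  inferInstanceAs (AddCommGroup ((Fin 4 → ℤ) ⧸ LinearMap.range (Matrix.toLin' (goeritz n))))

lemma goeritz_toLin (n : ℤ) (w : Fin 4 → ℤ) :
    Matrix.toLin' (goeritz n) w =
      ![4 * w 0 - w 2, -4 * w 1 + w 3,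
        -w 0 + (2 - n) * w 2 + n * w 3, w 1 + n * w 2 + (-n - 2) * w 3] := by
  funext i
  fin_cases i <;>
    simp [goeritz, Matrix.toLin'_apply, Matrix.mulVec, dotProduct,
      Fin.sum_univ_four] <;> ring

/-- The presentation map into `ZMod 7 × ZMod 7` used in the case `7 ∣ n`. -/
def phi7 : (Fin 4 → ℤ) →ₗ[ℤ] ZMod 7 × ZMod 7 where
  toFun v := (((v 0 + 4 * v 2 : ℤ) : ZMod 7), ((v 1 + 4 * v 3 : ℤ) : ZMod 7))
  map_add' x y := by
    simp only [Pi.add_apply, Prod.mk_add_mk, Prod.mk.injEq]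
    constructor <;> push_cast <;> ring
  map_smul' z x := by
    simp only [Pi.smul_apply, smul_eq_mul, RingHom.id_apply, Prod.smul_mk, zsmul_eq_mul,
      Prod.mk.injEq]
    constructor <;> push_cast <;> ring

/-- The presentation map into `ZMod 49` used in the case `¬ 7 ∣ n`. -/
def phi49 (c : ZMod 49) : (Fin 4 → ℤ) →ₗ[ℤ] ZMod 49 where
  toFun v := ((v 0 : ℤ) : ZMod 49) + c * ((v 1 : ℤ) : ZMod 49)
      + 4 * ((v 2 : ℤ) : ZMod 49) + 4 * c * ((v 3 : ℤ) : ZMod 49)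
  map_add' x y := by
    simp only [Pi.add_apply]
    push_cast
    ring
  map_smul' z x := by
    simp only [Pi.smul_apply, smul_eq_mul, RingHom.id_apply, zsmul_eq_mul]
    push_cast
    ring

lemma goeritz_coker_dvd (m : ℤ) :
    Nonempty (((Fin 4 → ℤ) ⧸ LinearMap.range (Matrix.toLin' (goeritz (7 * m))))
      ≃+ (ZMod 7 × ZMod 7)) := by
  have h7 : (7 : ZMod 7) = 0 := by decide
  have hle : LinearMap.range (Matrix.toLin' (goeritz (7 * m))) ≤ LinearMap.ker phi7 := by
    rintro x ⟨w, rfl⟩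
    rw [LinearMap.mem_ker, goeritz_toLin]
    simp only [phi7, LinearMap.coe_mk, AddHom.coe_mk, Matrix.cons_val_zero,
      Matrix.cons_val_one, Matrix.head_cons, Matrix.cons_val_two, Matrix.tail_cons,
      Matrix.cons_val_three, Prod.mk_eq_zero]
    constructor
    · push_cast
      linear_combination ((1 : ZMod 7) - 4 * (m : ZMod 7)) * (w 2 : ZMod 7) * h7
        + 4 * (m : ZMod 7) * (w 3 : ZMod 7) * h7
    · push_cast
      linear_combination (4 * (m : ZMod 7) * (w 2 : ZMod 7)
        - 4 * (m : ZMod 7) * (w 3 : ZMod 7) - (w 3 : ZMod 7)) * h7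
  have hker : LinearMap.ker phi7 ≤ LinearMap.range (Matrix.toLin' (goeritz (7 * m))) := by
    intro v hv
    simp only [LinearMap.mem_ker, phi7, LinearMap.coe_mk, AddHom.coe_mk,
      Prod.mk_eq_zero] at hv
    obtain ⟨hv1, hv2⟩ := hv
    obtain ⟨k, hk⟩ := (ZMod.intCast_zmod_eq_zero_iff_dvd _ 7).mp hv1
    obtain ⟨l, hl⟩ := (ZMod.intCast_zmod_eq_zero_iff_dvd _ 7).mp hv2
    push_cast at hk hl
    refine ⟨![(m + 2) * k + m * l - v 2, m * k + (m - 2) * l + v 3,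
      (4 * m + 1) * k + 4 * m * l, 4 * m * k + (4 * m - 1) * l], ?_⟩
    rw [goeritz_toLin]
    funext i
    fin_cases i
    · show 4 * ((m + 2) * k + m * l - v 2) - ((4 * m + 1) * k + 4 * m * l) = v 0
      linear_combination -hk
    · show -4 * (m * k + (m - 2) * l + v 3) + (4 * m * k + (4 * m - 1) * l) = v 1
      linear_combination -hl
    · show -((m + 2) * k + m * l - v 2) + (2 - 7 * m) * ((4 * m + 1) * k + 4 * m * l)
          + 7 * m * (4 * m * k + (4 * m - 1) * l) = v 2
      ring
    · show (m * k + (m - 2) * l + v 3) + 7 * m * ((4 * m + 1) * k + 4 * m * l)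
          + (-(7 * m) - 2) * (4 * m * k + (4 * m - 1) * l) = v 3
      ring
  have hsurj : Function.Surjective phi7 := by
    rintro ⟨a, b⟩
    obtain ⟨j, rfl⟩ := ZMod.intCast_surjective a
    obtain ⟨l, rfl⟩ := ZMod.intCast_surjective b
    refine ⟨![j, l, 0, 0], ?_⟩
    simp [phi7]
  let ψ := Submodule.liftQ _ phi7 hle
  have hinj : Function.Injective ψ :=
    LinearMap.ker_eq_bot.mp (Submodule.ker_liftQ_eq_bot _ _ _ hker)
  have hs : Function.Surjective ψ := by
    intro t
    obtain ⟨v, hv⟩ := hsurj t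
    exact ⟨Submodule.Quotient.mk v, hv⟩
  exact ⟨(LinearEquiv.ofBijective ψ ⟨hinj, hs⟩).toAddEquiv⟩

lemma goeritz_coker_not_dvd (n : ℤ) (h : ¬ (7 : ℤ) ∣ n) :
    Nonempty (((Fin 4 → ℤ) ⧸ LinearMap.range (Matrix.toLin' (goeritz n)))
      ≃+ ZMod 49) := by
  have h49 : (49 : ZMod 49) = 0 := by decide
  have hp : Prime (7 : ℤ) := by norm_num
  have hco : IsCoprime (4 * n : ℤ) 49 := by
    have h1 : IsCoprime (7 : ℤ) (4 * n) :=
      IsCoprime.mul_right (hp.coprime_iff_not_dvd.mpr (by norm_num))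
        (hp.coprime_iff_not_dvd.mpr h)
    have h2 : IsCoprime ((7 : ℤ) ^ 2) (4 * n) := h1.pow_left
    have h3 : ((7 : ℤ) ^ 2) = 49 := by norm_num
    rw [h3] at h2
    exact h2.symm
  obtain ⟨a, b, hab⟩ := hco
  set u : ZMod 49 := (a : ZMod 49) with hu_def
  set N : ZMod 49 := (n : ZMod 49) with hN_def
  have hu : 4 * N * u = 1 := by
    have := congrArg (fun z : ℤ => (z : ZMod 49)) hab
    push_cast at this
    linear_combination this - (b : ZMod 49) * h49
  set c : ZMod 49 := 1 - 7 * u with hc_def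
  have hle : LinearMap.range (Matrix.toLin' (goeritz n)) ≤ LinearMap.ker (phi49 c) := by
    rintro x ⟨w, rfl⟩
    rw [LinearMap.mem_ker, goeritz_toLin]
    simp only [phi49, LinearMap.coe_mk, AddHom.coe_mk, Matrix.cons_val_zero,
      Matrix.cons_val_one, Matrix.head_cons, Matrix.cons_val_two, Matrix.tail_cons,
      Matrix.cons_val_three]
    push_cast
    rw [hc_def, ← hN_def]
    linear_combination (-7 * (w 2 : ZMod 49) + 7 * (w 3 : ZMod 49)) * hu
      + u * (w 3 : ZMod 49) * h49
  have hker : LinearMap.ker (phi49 c) ≤ LinearMap.range (Matrix.toLin' (goeritz n)) := by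
    intro v hv
    simp only [LinearMap.mem_ker, phi49, LinearMap.coe_mk, AddHom.coe_mk] at hv
    set V0 : ZMod 49 := ((v 0 : ℤ) : ZMod 49)
    set V1 : ZMod 49 := ((v 1 : ℤ) : ZMod 49)
    set V2 : ZMod 49 := ((v 2 : ℤ) : ZMod 49)
    set V3 : ZMod 49 := ((v 3 : ℤ) : ZMod 49)
    have ha0 : (49 : ℤ) ∣ ((n + 14) * v 0 + n * v 1 + (4 * n + 7) * v 2 + 4 * n * v 3) := by
      have hz : (((n + 14) * v 0 + n * v 1 + (4 * n + 7) * v 2 + 4 * n * v 3 : ℤ)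
          : ZMod 49) = 0 := by
        push_cast
        linear_combination (N + 14) * hv + (14 * V1 + 7 * V3) * hu
          + ((2 * u - N * u) * V1 - V2 + (8 * u - 1) * V3) * h49
      exact_mod_cast (ZMod.intCast_zmod_eq_zero_iff_dvd _ 49).mp hz
    have ha1 : (49 : ℤ) ∣ (n * v 0 + (n - 14) * v 1 + 4 * n * v 2 + (4 * n - 7) * v 3) := by
      have hz : ((n * v 0 + (n - 14) * v 1 + 4 * n * v 2 + (4 * n - 7) * v 3 : ℤ)
          : ZMod 49) = 0 := by
        push_cast
        linear_combination N * hv + (14 * V1 + 7 * V3) * hu + (-(N * u) * V1) * h49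
      exact_mod_cast (ZMod.intCast_zmod_eq_zero_iff_dvd _ 49).mp hz
    have ha2 : (49 : ℤ) ∣ ((4 * n + 7) * v 0 + 4 * n * v 1 + (16 * n + 28) * v 2
        + 16 * n * v 3) := by
      have hz : (((4 * n + 7) * v 0 + 4 * n * v 1 + (16 * n + 28) * v 2 + 16 * n * v 3 : ℤ)
          : ZMod 49) = 0 := by
        push_cast
        linear_combination (4 * N + 7) * hv + (7 * V1 + 28 * V3) * hu
          + (u * V1 + 4 * u * V3) * h49
      exact_mod_cast (ZMod.intCast_zmod_eq_zero_iff_dvd _ 49).mp hz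
    have ha3 : (49 : ℤ) ∣ (4 * n * v 0 + (4 * n - 7) * v 1 + 16 * n * v 2
        + (16 * n - 28) * v 3) := by
      have hz : ((4 * n * v 0 + (4 * n - 7) * v 1 + 16 * n * v 2 + (16 * n - 28) * v 3 : ℤ)
          : ZMod 49) = 0 := by
        push_cast
        linear_combination 4 * N * hv + (7 * V1 + 28 * V3) * hu
      exact_mod_cast (ZMod.intCast_zmod_eq_zero_iff_dvd _ 49).mp hz
    obtain ⟨w0, hw0⟩ := ha0
    obtain ⟨w1, hw1⟩ := ha1
    obtain ⟨w2, hw2⟩ := ha2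
    obtain ⟨w3, hw3⟩ := ha3
    have h49ne : (49 : ℤ) ≠ 0 := by norm_num
    refine ⟨![w0, w1, w2, w3], ?_⟩
    rw [goeritz_toLin]
    funext i
    fin_cases i
    · show 4 * w0 - w2 = v 0
      exact mul_left_cancel₀ h49ne (by linear_combination (-4) * hw0 + hw2)
    · show -4 * w1 + w3 = v 1
      exact mul_left_cancel₀ h49ne (by linear_combination 4 * hw1 - hw3)
    · show -w0 + (2 - n) * w2 + n * w3 = v 2
      exact mul_left_cancel₀ h49ne (by linear_combination hw0 - (2 - n) * hw2 - n * hw3)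
    · show w1 + n * w2 + (-n - 2) * w3 = v 3
      exact mul_left_cancel₀ h49ne (by linear_combination -hw1 - n * hw2 + (n + 2) * hw3)
  have hsurj : Function.Surjective (phi49 c) := by
    intro t
    obtain ⟨z, rfl⟩ := ZMod.intCast_surjective t
    refine ⟨![z, 0, 0, 0], ?_⟩
    simp [phi49]
  let ψ := Submodule.liftQ _ (phi49 c) hle
  have hinj : Function.Injective ψ :=
    LinearMap.ker_eq_bot.mp (Submodule.ker_liftQ_eq_bot _ _ _ hker)
  have hs : Function.Surjective ψ := by
    intro t
    obtain ⟨v, hv⟩ := hsurj t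
    exact ⟨Submodule.Quotient.mk v, hv⟩
  exact ⟨(LinearEquiv.ofBijective ψ ⟨hinj, hs⟩).toAddEquiv⟩

theorem goeritz_coker (n : ℤ) :
    ((7 : ℤ) ∣ n → Nonempty (goeritzCoker n ≃+ (ZMod 7 × ZMod 7))) ∧
      (¬ (7 : ℤ) ∣ n → Nonempty (goeritzCoker n ≃+ ZMod 49)) := by
  constructor
  · rintro ⟨m, rfl⟩
    exact goeritz_coker_dvd m
  · intro h
    exact goeritz_coker_not_dvd n h
end

section
/- The 4×4 integer matrix [[4,0,-1,0],[0,-4,0,1],[-1,0,2-n,n],[0,1,n,-n-2]] and the 2×2 matrix [[7,4n],[0,7]] present isomorphic abelian groups (have isomorphic cokernels) for every integer n. -/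
/-- The reduced presentation matrix `[[7, 4n], [0, 7]]`. -/
def redMat (n : ℤ) : Matrix (Fin 2) (Fin 2) ℤ :=
  Matrix.of ![![7, 4 * n], ![0, 7]]

/-- The abelian group presented by `redMat n`. -/
def redCoker (n : ℤ) : Type :=
  (Fin 2 → ℤ) ⧸ LinearMap.range (Matrix.toLin' (redMat n))

noncomputable instance (n : ℤ) : AddCommGroup (redCoker n) :=
  inferInstanceAs (AddCommGroup ((Fin 2 → ℤ) ⧸ LinearMap.range (Matrix.toLin' (redMat n))))

namespace Matrix

variable {R : Type*} [CommRing R] {l l' m m' n n' : Type*}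
  [Fintype l'] [Fintype m] [Fintype m'] [Fintype n']
  [DecidableEq l'] [DecidableEq m] [DecidableEq m'] [DecidableEq n']

abbrev coker (A : Matrix m m' R) : Type _ := (m → R) ⧸ LinearMap.range (toLin' A)

section

variable {A : Matrix m m' R} {B : Matrix n n' R} {F : Matrix n m R} {X : Matrix n' m' R}

theorem range_toLin'_le_comap_of_mul_eq (h : F * A = B * X) :
    LinearMap.range (toLin' A) ≤ (LinearMap.range (toLin' B)).comap (toLin' F) := by
  rintro _ ⟨x, rfl⟩
  exact ⟨toLin' X x, by rw [← toLin'_mul_apply, ← h, toLin'_mul_apply]⟩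

noncomputable def cokerMap (h : F * A = B * X) : coker A →ₗ[R] coker B :=
  Submodule.mapQ _ _ (toLin' F) (range_toLin'_le_comap_of_mul_eq h)

end

theorem cokerMap_eq_id {A : Matrix m m' R} {E : Matrix m m R} {X : Matrix m' m' R}
    {H : Matrix m' m R} (h : E * A = A * X) (hE : E = 1 + A * H) :
    cokerMap h = LinearMap.id := by
  refine Submodule.linearMap_qext _ <| LinearMap.ext fun x ↦
    (Submodule.Quotient.eq _).2 ⟨toLin' H x, ?_⟩
  simp [hE]

variable [Fintype n] [DecidableEq n]

theorem cokerMap_comp {A : Matrix m m' R} {B : Matrix n n' R} {C : Matrix l l' R}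
    {F : Matrix n m R} {X : Matrix n' m' R} {G : Matrix l n R} {Y : Matrix l' n' R}
    (hF : F * A = B * X) (hG : G * B = C * Y) :
    cokerMap hG ∘ₗ cokerMap hF =
      cokerMap (show G * F * A = C * (Y * X) by
        rw [Matrix.mul_assoc, hF, ← Matrix.mul_assoc, hG, Matrix.mul_assoc]) := by
  refine Submodule.linearMap_qext _ <| LinearMap.ext fun x ↦ ?_
  simp [cokerMap]

noncomputable def cokerEquivOfMulEqOneAdd {A : Matrix m m' R} {B : Matrix n n' R}
    {F : Matrix n m R} {X : Matrix n' m' R} {G : Matrix m n R} {Y : Matrix m' n' R}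
    {H : Matrix m' m R} {K : Matrix n' n R}
    (hFA : F * A = B * X) (hGB : G * B = A * Y)
    (hGF : G * F = 1 + A * H) (hFG : F * G = 1 + B * K) : coker A ≃ₗ[R] coker B :=
  .ofLinearMap (cokerMap hFA) (cokerMap hGB)
    (by rw [cokerMap_comp]; exact cokerMap_eq_id _ hFG)
    (by rw [cokerMap_comp]; exact cokerMap_eq_id _ hGF)

end Matrix

def goeritzToRed : Matrix (Fin 2) (Fin 4) ℤ := !![0, 1, 0, 4; 1, 1, 4, 4]

def redToGoeritz : Matrix (Fin 4) (Fin 2) ℤ := !![-1, 1; 1, 0; 0, 0; 0, 0]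

theorem goeritzToRed_mul_goeritz (n : ℤ) :
    goeritzToRed * goeritz n = redMat n * !![0, 0, 0, -1; 0, 0, 1, -1] := by
  ext i j
  fin_cases i <;> fin_cases j <;>
    simp [goeritzToRed, goeritz, redMat, Matrix.mul_apply, Fin.sum_univ_four] <;> ring

theorem redToGoeritz_mul_redMat (n : ℤ) :
    redToGoeritz * redMat n = goeritz n * !![-2, 2 - n; -2, -n; -1, 1; -1, 0] := by
  ext i j
  fin_cases i <;> fin_cases j <;>
    simp [redToGoeritz, goeritz, redMat, Matrix.mul_apply, Fin.sum_univ_four] <;> ring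

theorem redToGoeritz_mul_goeritzToRed (n : ℤ) :
    redToGoeritz * goeritzToRed =
      1 + goeritz n * !![0, 0, 1, 0; 0, 0, 0, -1; 0, 0, 0, 0; 0, 0, 0, 0] := by
  ext i j
  fin_cases i <;> fin_cases j <;> simp [redToGoeritz, goeritzToRed, goeritz, Matrix.mul_apply]

theorem goeritzToRed_mul_redToGoeritz : goeritzToRed * redToGoeritz = 1 := by
  ext i j
  fin_cases i <;> fin_cases j <;> simp [redToGoeritz, goeritzToRed, Matrix.mul_apply, Fin.sum_univ_four]

theorem goeritz_coker_iso_redMat_coker (n : ℤ) :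
    Nonempty (goeritzCoker n ≃+ redCoker n) :=
  ⟨(Matrix.cokerEquivOfMulEqOneAdd (goeritzToRed_mul_goeritz n) (redToGoeritz_mul_redMat n)
    (redToGoeritz_mul_goeritzToRed n)
    (K := 0) (by rw [goeritzToRed_mul_redToGoeritz, Matrix.mul_zero, add_zero])).toAddEquiv⟩
end
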